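/- arXiv:2207.01361 — 5 statements merged into one kernel-verified Lean document; each statement's English description precedes it below -/
import Mathlib

section
/- Let A be an n×n real symmetric positive definite matrix and let B be an m×n real matrix of rank r. Then the (n+m)×(n+m) real symmetric matrix M = [[A, Bᵀ], [B, 0]] has exactly n positive eigenvalues, exactly r negative eigenvalues, and exactly m − r zero eigenvalues, counted with multiplicity. -/
/-!
Since `A` is positive definite, the quadratic form of `M` is positive definite on `ℝⁿ × 0` and
vanishes on `0 × ℝᵐ`. The number of positive eigenvalues of a symmetric matrix bounds the
dimension of every subspace on which its form is positive definite, and its complement bounds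
that of every subspace on which the form is nonpositive (half of Sylvester's law of inertia), so
`M` has exactly `n` positive eigenvalues. If `M (x, y) = 0` then `Bx = 0`, hence
`xᵀAx = (x, y)ᵀM(x, y) - 2 yᵀBx = 0` and `x = 0`; thus `ker M = 0 × ker Bᵀ` and
`rank M = n + r`, which counts the nonzero eigenvalues.
-/

open Matrix Finset

theorem Submodule.finrank_add_finrank_le_of_pos_of_nonpos {K V : Type*} [DivisionRing K]
    [AddCommGroup V] [Module K V] [FiniteDimensional K V] (Q : V → ℝ) {W₁ W₂ : Submodule K V}
    (h₁ : ∀ x ∈ W₁, x ≠ 0 → 0 < Q x) (h₂ : ∀ x ∈ W₂, Q x ≤ 0) :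
    Module.finrank K W₁ + Module.finrank K W₂ ≤ Module.finrank K V :=
  Submodule.finrank_add_finrank_le_of_disjoint <| Submodule.disjoint_def.mpr fun x hx₁ hx₂ =>
    by_contra fun hx => (h₂ x hx₂).not_gt (h₁ x hx₁ hx)

theorem exists_finrank_eq_card_forall_apply_eq_zero {ι : Type*} (R : Type*) [Semiring R]
    [StrongRankCondition R] (s : Finset ι) :
    ∃ V : Submodule R (ι → R), Module.finrank R V = #s ∧ ∀ x ∈ V, ∀ i ∉ s, x i = 0 := by
  refine ⟨LinearMap.range (Function.ExtendByZero.linearMap R ((↑) : s → ι)), ?_, ?_⟩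
  · rw [LinearMap.finrank_range_of_inj
      (Function.extend_injective Subtype.val_injective (0 : ι → R))]
    simp
  · rintro _ ⟨y, rfl⟩ i hi
    exact Function.extend_apply' _ _ _ fun ⟨j, hj⟩ => hi (hj ▸ j.2)

namespace Matrix

variable {ι κ : Type*} [Fintype ι] [Fintype κ]

theorem dotProduct_diagonal_mulVec_self {R : Type*} [CommSemiring R] [DecidableEq ι]
    (d x : ι → R) : x ⬝ᵥ (diagonal d *ᵥ x) = ∑ i, d i * x i ^ 2 :=
  sum_congr rfl fun i _ => by rw [mulVec_diagonal]; ring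

section Diagonal

variable [DecidableEq ι] (d : ι → ℝ) {W : Submodule ℝ (ι → ℝ)}

theorem finrank_le_card_pos_of_diagonal (hW : ∀ x ∈ W, x ≠ 0 → 0 < x ⬝ᵥ (diagonal d *ᵥ x)) :
    Module.finrank ℝ W ≤ #{i | 0 < d i} := by
  obtain ⟨V, hV, hV₀⟩ := exists_finrank_eq_card_forall_apply_eq_zero ℝ {i | ¬ 0 < d i}
  have hnonpos : ∀ x ∈ V, x ⬝ᵥ (diagonal d *ᵥ x) ≤ 0 := by
    intro x hx
    rw [dotProduct_diagonal_mulVec_self]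
    refine sum_nonpos fun i _ => ?_
    by_cases hi : 0 < d i
    · simp [hV₀ x hx i (by simpa using hi)]
    · exact mul_nonpos_of_nonpos_of_nonneg (not_lt.mp hi) (sq_nonneg _)
  have hle := Submodule.finrank_add_finrank_le_of_pos_of_nonpos _ hW hnonpos
  have hsplit := card_filter_add_card_filter_not (s := univ) (fun i => 0 < d i)
  simp only [hV, Module.finrank_fintype_fun_eq_card, card_univ] at hle hsplit
  omega

theorem card_pos_add_finrank_le_of_diagonal (hW : ∀ x ∈ W, x ⬝ᵥ (diagonal d *ᵥ x) ≤ 0) :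
    #{i | 0 < d i} + Module.finrank ℝ W ≤ Fintype.card ι := by
  obtain ⟨V, hV, hV₀⟩ := exists_finrank_eq_card_forall_apply_eq_zero ℝ {i | 0 < d i}
  have hpos : ∀ x ∈ V, x ≠ 0 → 0 < x ⬝ᵥ (diagonal d *ᵥ x) := by
    intro x hx hx0
    rw [dotProduct_diagonal_mulVec_self]
    obtain ⟨j, hj⟩ := Function.ne_iff.mp hx0
    have hdj : 0 < d j := by_contra fun h => hj (hV₀ x hx j (by simpa using h))
    refine sum_pos' (fun i _ => ?_) ⟨j, mem_univ j, by simp at hj; positivity⟩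
    by_cases hi : 0 < d i
    · positivity
    · simp [hV₀ x hx i (by simpa using hi)]
  simpa [hV] using Submodule.finrank_add_finrank_le_of_pos_of_nonpos _ hpos hW

end Diagonal

section Hermitian

variable [DecidableEq ι] {M : Matrix ι ι ℝ} (hM : M.IsHermitian) {W : Submodule ℝ (ι → ℝ)}

theorem IsHermitian.dotProduct_mulVec_self_eq (x : ι → ℝ) :
    x ⬝ᵥ (M *ᵥ x) = ((hM.eigenvectorUnitary⁻¹ : unitaryGroup ι ℝ) *ᵥ x) ⬝ᵥ
      (diagonal hM.eigenvalues *ᵥ ((hM.eigenvectorUnitary⁻¹ : unitaryGroup ι ℝ) *ᵥ x)) := by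
  conv_lhs => rw [hM.spectral_theorem]
  simp [Unitary.conjStarAlgAut_apply, ← mulVec_mulVec, dotProduct_mulVec, vecMul_mulVec,
    star_eq_conjTranspose, conjTranspose_eq_transpose_of_trivial]

theorem IsHermitian.finrank_le_card_pos (hW : ∀ x ∈ W, x ≠ 0 → 0 < x ⬝ᵥ (M *ᵥ x)) :
    Module.finrank ℝ W ≤ #{i | 0 < hM.eigenvalues i} := by
  rw [← (UnitaryGroup.toLinearEquiv hM.eigenvectorUnitary⁻¹).finrank_map_eq W]
  refine finrank_le_card_pos_of_diagonal _ ?_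
  rintro _ ⟨x, hx, rfl⟩ hUx
  have hx0 : x ≠ 0 := by rintro rfl; simp at hUx
  exact hM.dotProduct_mulVec_self_eq x ▸ hW x hx hx0

theorem IsHermitian.card_pos_add_finrank_le (hW : ∀ x ∈ W, x ⬝ᵥ (M *ᵥ x) ≤ 0) :
    #{i | 0 < hM.eigenvalues i} + Module.finrank ℝ W ≤ Fintype.card ι := by
  rw [← (UnitaryGroup.toLinearEquiv hM.eigenvectorUnitary⁻¹).finrank_map_eq W]
  refine card_pos_add_finrank_le_of_diagonal _ ?_
  rintro _ ⟨x, hx, rfl⟩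
  exact hM.dotProduct_mulVec_self_eq x ▸ hW x hx

end Hermitian

section Count

variable [DecidableEq ι] {𝕜 : Type*} [RCLike 𝕜] {M : Matrix ι ι 𝕜} (hM : M.IsHermitian)

theorem IsHermitian.card_pos_add_card_neg :
    #{i | 0 < hM.eigenvalues i} + #{i | hM.eigenvalues i < 0} = M.rank := by
  rw [hM.rank_eq_card_non_zero_eigs, Fintype.card_subtype, ← card_union_of_disjoint
    (disjoint_filter.mpr fun _ _ h₁ h₂ => h₁.not_gt h₂), ← filter_or]
  simp only [ne_iff_lt_or_gt, or_comm]

theorem IsHermitian.card_zero_add_rank :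
    #{i | hM.eigenvalues i = 0} + M.rank = Fintype.card ι := by
  rw [hM.rank_eq_card_non_zero_eigs, Fintype.card_subtype, card_filter_add_card_filter_not,
    card_univ]

end Count

section SaddlePoint

theorem dotProduct_fromBlocks_transpose_zero_mulVec_sumElim {R : Type*} [CommSemiring R]
    (A : Matrix ι ι R) (B : Matrix κ ι R) (x : ι → R) (y : κ → R) :
    (x ⊕ᵥ y) ⬝ᵥ (fromBlocks A Bᵀ B 0 *ᵥ (x ⊕ᵥ y)) = x ⬝ᵥ (A *ᵥ x) + 2 * (y ⬝ᵥ (B *ᵥ x)) := by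
  simp only [fromBlocks_mulVec, Sum.elim_comp_inl, Sum.elim_comp_inr, zero_mulVec, add_zero,
    sumElim_dotProduct_sumElim, dotProduct_add]
  rw [dotProduct_mulVec x Bᵀ, vecMul_transpose, dotProduct_comm (B *ᵥ x), two_mul, add_assoc]

variable {A : Matrix ι ι ℝ} (hA : A.PosDef) (B : Matrix κ ι ℝ)
include hA

theorem card_pos_eigenvalues_fromBlocks_transpose_zero [DecidableEq ι] [DecidableEq κ]
    (hM : (fromBlocks A Bᵀ B 0).IsHermitian) :
    #{i | 0 < hM.eigenvalues i} = Fintype.card ι := by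
  let e := LinearEquiv.sumPiEquivProdPi ℝ ι κ fun _ => ℝ
  apply le_antisymm
  · have hnonpos := hM.card_pos_add_finrank_le
      (W := LinearMap.range (e.symm.toLinearMap ∘ₗ LinearMap.inr ℝ _ _)) <| by
      rintro _ ⟨y, rfl⟩
      exact (dotProduct_fromBlocks_transpose_zero_mulVec_sumElim A B 0 y).trans_le (by simp)
    rw [LinearMap.finrank_range_of_inj fun _ _ h => LinearMap.inr_injective (e.symm.injective h),
      Module.finrank_fintype_fun_eq_card, Fintype.card_sum] at hnonpos
    omega
  · have hpos := hM.finrank_le_card_pos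
      (W := LinearMap.range (e.symm.toLinearMap ∘ₗ LinearMap.inl ℝ _ _)) <| by
      rintro _ ⟨x, rfl⟩ hx
      have hx0 : x ≠ 0 := by rintro rfl; exact hx (by simp)
      refine lt_of_lt_of_eq ?_ (dotProduct_fromBlocks_transpose_zero_mulVec_sumElim A B x 0).symm
      simpa using hA.dotProduct_mulVec_pos hx0
    rwa [LinearMap.finrank_range_of_inj fun _ _ h => LinearMap.inl_injective (e.symm.injective h),
      Module.finrank_fintype_fun_eq_card] at hpos

theorem fromBlocks_transpose_zero_mulVec_sumElim_eq_zero_iff (x : ι → ℝ) (y : κ → ℝ) :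
    fromBlocks A Bᵀ B 0 *ᵥ (x ⊕ᵥ y) = 0 ↔ x = 0 ∧ Bᵀ *ᵥ y = 0 := by
  constructor
  · intro h
    have hq := dotProduct_fromBlocks_transpose_zero_mulVec_sumElim A B x y
    simp only [h, dotProduct_zero] at hq
    simp only [fromBlocks_mulVec, Sum.elim_comp_inl, Sum.elim_comp_inr, zero_mulVec, add_zero,
      ← Sum.elim_zero_zero, Sum.elim_eq_iff] at h
    obtain ⟨hx, hBx⟩ := h
    have hx0 : x = 0 := by
      by_contra hx0
      have hpos := hA.dotProduct_mulVec_pos hx0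
      simp only [hBx, dotProduct_zero, mul_zero, add_zero] at hq
      simp [← hq] at hpos
    subst hx0
    simpa using hx
  · rintro ⟨rfl, hy⟩
    simp [fromBlocks_mulVec, hy]

theorem ker_mulVecLin_fromBlocks_transpose_zero :
    LinearMap.ker (fromBlocks A Bᵀ B 0).mulVecLin = (LinearMap.ker Bᵀ.mulVecLin).map
      ((LinearEquiv.sumPiEquivProdPi ℝ ι κ fun _ => ℝ).symm.toLinearMap ∘ₗ
        LinearMap.inr ℝ _ _) := by
  ext v
  constructor
  · intro hv
    obtain ⟨x, y, rfl⟩ : ∃ x y, v = x ⊕ᵥ y := ⟨_, _, (Sum.elim_comp_inl_inr v).symm⟩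
    obtain ⟨rfl, hy⟩ := (fromBlocks_transpose_zero_mulVec_sumElim_eq_zero_iff hA B x y).mp hv
    exact ⟨y, hy, rfl⟩
  · rintro ⟨y, hy, rfl⟩
    exact (fromBlocks_transpose_zero_mulVec_sumElim_eq_zero_iff hA B 0 y).mpr ⟨rfl, hy⟩

theorem rank_fromBlocks_transpose_zero :
    (fromBlocks A Bᵀ B 0).rank = Fintype.card ι + B.rank := by
  let e := LinearEquiv.sumPiEquivProdPi ℝ ι κ fun _ => ℝ
  have hM := (fromBlocks A Bᵀ B 0).mulVecLin.finrank_range_add_finrank_ker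
  have hB := Bᵀ.mulVecLin.finrank_range_add_finrank_ker
  rw [ker_mulVecLin_fromBlocks_transpose_zero hA B, ← (Submodule.equivMapOfInjective _
    (fun _ _ h => LinearMap.inr_injective (e.symm.injective h)) _).finrank_eq] at hM
  rw [← rank_transpose B]
  simp only [Module.finrank_fintype_fun_eq_card, Fintype.card_sum] at hM hB
  unfold rank
  omega

end SaddlePoint
end Matrix

/-- Inertia of the saddle-point matrix `M = [[A, Bᵀ], [B, 0]]` with `A` symmetric positive
definite (n×n) and `B` of rank `r` (m×n): `M` has exactly `n` positive eigenvalues,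
exactly `r` negative eigenvalues and exactly `m - r` zero eigenvalues, counted with
multiplicity. -/
theorem saddle_point_inertia
    (n m r : ℕ)
    (A : Matrix (Fin n) (Fin n) ℝ) (hA : A.PosDef)
    (B : Matrix (Fin m) (Fin n) ℝ) (hB : B.rank = r)
    (hM : (Matrix.fromBlocks A Bᵀ B (0 : Matrix (Fin m) (Fin m) ℝ)).IsHermitian) :
    (Finset.univ.filter fun i => 0 < hM.eigenvalues i).card = n ∧
    (Finset.univ.filter fun i => hM.eigenvalues i < 0).card = r ∧
    (Finset.univ.filter fun i => hM.eigenvalues i = 0).card = m - r := by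
  have hpos := card_pos_eigenvalues_fromBlocks_transpose_zero hA B hM
  have hrank := rank_fromBlocks_transpose_zero hA B
  have hsplit := hM.card_pos_add_card_neg
  have hzero := hM.card_zero_add_rank
  simp only [Fintype.card_fin, Fintype.card_sum, hB] at hpos hrank hzero
  exact ⟨hpos, by omega, by omega⟩
end

section
/- Let n_I, n_Γ, m be positive natural numbers. Let A_II (n_I×n_I), A_ΓI (n_Γ×n_I), A_ΓΓ (n_Γ×n_Γ) be real matrices such that the full velocity matrix A = [[A_II, A_ΓIᵀ], [A_ΓI, A_ΓΓ]] is symmetric positive definite, and let B_II (m×n_I) be a real matrix whose rows are linearly independent (rank B_II = m), and B_IΓ (m×n_Γ) a real matrix. Let K = [[A_II, B_IIᵀ], [B_II, 0]] be the interior saddle-point matrix, which is invertible under these hypotheses. Then the Schur complement S_Γ = A_ΓΓ − [A_ΓI, B_IΓᵀ] K⁻¹ [A_ΓIᵀ; B_IΓ] (i.e., A_ΓΓ minus the product of the block row [A_ΓI B_IΓᵀ], the inverse of K, and the block column stacking A_ΓIᵀ over B_IΓ) is an n_Γ×n_Γ real symmetric positive definite matrix. -/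
/-!
Put `(U; Q) := K⁻¹ [A_ΓIᵀ; B_IΓ]`. The saddle-point equations `A_II U + B_IIᵀ Q = A_ΓIᵀ` and
`B_II U = B_IΓ` turn `S_Γ` into the congruence `Tᵀ A T` with `T = [-U; 1]`, which is positive
definite because `T` is injective. The matrix `K` is invertible: a kernel vector `(u, q)` has
`uᵀ A_II u = -(B_II u)ᵀ q = 0`, so `u = 0`, and then `B_IIᵀ q = 0` forces `q = 0` since `B_II`
has full row rank.
-/

open Matrix

namespace Matrix

variable {m n p : Type*} [Fintype m] [Fintype n] [Fintype p]

theorem mulVec_transpose_injective_of_rank_eq_card {K : Type*} [Field K] {B : Matrix m n K}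
    (hB : B.rank = Fintype.card m) : Function.Injective Bᵀ.mulVec := by
  rw [mulVec_injective_iff, col_transpose, linearIndependent_iff_card_eq_finrank_span,
    Set.finrank, ← rank_eq_finrank_span_row, hB]

omit [Fintype m] [Fintype p] in
theorem fromRows_mulVec_injective_of_right {R : Type*} [Semiring R] (A₁ : Matrix m n R)
    {A₂ : Matrix p n R} (h : Function.Injective A₂.mulVec) :
    Function.Injective (fromRows A₁ A₂).mulVec := fun x y hxy =>
  h (by simpa [fromRows_mulVec] using congrArg (· ∘ Sum.inr) hxy)

theorem PosDef.fromBlocks_zero₂₂_mulVec_injective {A : Matrix n n ℝ} (hA : A.PosDef)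
    {B : Matrix m n ℝ} (hB : Function.Injective Bᵀ.mulVec) :
    Function.Injective (fromBlocks A Bᵀ B 0).mulVec := by
  rw [← coe_mulVecLin, ← LinearMap.ker_eq_bot, ker_mulVecLin_eq_bot_iff]
  intro v hv
  obtain ⟨x, y, rfl⟩ : ∃ x y, v = Sum.elim x y := ⟨_, _, (Sum.elim_comp_inl_inr v).symm⟩
  rw [fromBlocks_mulVec, Sum.elim_comp_inl, Sum.elim_comp_inr, zero_mulVec, add_zero,
    ← Sum.elim_zero_zero, Sum.elim_eq_iff] at hv
  rw [← Sum.elim_zero_zero, Sum.elim_eq_iff]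
  obtain ⟨hAxy, hBx⟩ := hv
  have hx : x = 0 := by
    by_contra hx
    have hpos := hA.dotProduct_mulVec_pos hx
    rw [star_trivial, eq_neg_of_add_eq_zero_left hAxy, dotProduct_neg, dotProduct_mulVec,
      vecMul_transpose, hBx, zero_dotProduct, neg_zero] at hpos
    exact hpos.false
  refine ⟨hx, hB ?_⟩
  rwa [hx, mulVec_zero, zero_add, ← mulVec_zero Bᵀ] at hAxy

theorem sub_fromCols_mul_eq_transpose_mul_fromBlocks_mul_fromRows {R : Type*} [CommRing R]
    [DecidableEq p]
    {A₁₁ : Matrix n n R} {A₂₁ : Matrix p n R} {A₂₂ : Matrix p p R}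
    {B₁ : Matrix m n R} {B₂ : Matrix m p R} {U : Matrix n p R} {Q : Matrix m p R}
    (h : fromBlocks A₁₁ B₁ᵀ B₁ 0 * fromRows U Q = fromRows A₂₁ᵀ B₂) :
    A₂₂ - fromCols A₂₁ B₂ᵀ * fromRows U Q =
      (fromRows (-U) (1 : Matrix p p R))ᵀ * fromBlocks A₁₁ A₂₁ᵀ A₂₁ A₂₂ *
        fromRows (-U) (1 : Matrix p p R) := by
  rw [fromBlocks_mul_fromRows, Matrix.zero_mul, add_zero] at h
  obtain ⟨hU, rfl⟩ := fromRows_inj h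
  rw [transpose_fromRows, fromCols_mul_fromBlocks, fromCols_mul_fromRows, fromCols_mul_fromRows,
    ← hU]
  simp only [transpose_one, transpose_neg, transpose_mul, Matrix.one_mul, Matrix.mul_one,
    Matrix.neg_mul, Matrix.mul_neg, Matrix.mul_add, Matrix.add_mul, Matrix.mul_assoc]
  abel

variable [DecidableEq n] [DecidableEq m] [DecidableEq p]

theorem PosDef.sub_fromCols_mul_inv_mul_fromRows {A₁₁ : Matrix n n ℝ} {A₂₁ : Matrix p n ℝ}
    {A₂₂ : Matrix p p ℝ} (hA : (fromBlocks A₁₁ A₂₁ᵀ A₂₁ A₂₂).PosDef) {B₁ : Matrix m n ℝ}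
    (B₂ : Matrix m p ℝ) (hK : IsUnit (fromBlocks A₁₁ B₁ᵀ B₁ 0).det) :
    (A₂₂ - fromCols A₂₁ B₂ᵀ * (fromBlocks A₁₁ B₁ᵀ B₁ 0)⁻¹ * fromRows A₂₁ᵀ B₂).PosDef := by
  rw [Matrix.mul_assoc]
  set M := (fromBlocks A₁₁ B₁ᵀ B₁ 0)⁻¹ * fromRows A₂₁ᵀ B₂
  have hM : fromBlocks A₁₁ B₁ᵀ B₁ 0 * fromRows M.toRows₁ M.toRows₂ = fromRows A₂₁ᵀ B₂ := by
    rw [fromRows_toRows, ← Matrix.mul_assoc, mul_nonsing_inv _ hK, Matrix.one_mul]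
  rw [← fromRows_toRows M, sub_fromCols_mul_eq_transpose_mul_fromBlocks_mul_fromRows hM,
    ← conjTranspose_eq_transpose_of_trivial]
  exact hA.conjTranspose_mul_mul_same
    (fromRows_mulVec_injective_of_right _ (mulVec_injective_of_isUnit isUnit_one))

end Matrix

theorem stokes_schur_complement_posDef_general
    (nI nΓ m : ℕ)
    (AII : Matrix (Fin nI) (Fin nI) ℝ)
    (AΓI : Matrix (Fin nΓ) (Fin nI) ℝ)
    (AΓΓ : Matrix (Fin nΓ) (Fin nΓ) ℝ)
    (hA : (Matrix.fromBlocks AII AΓIᵀ AΓI AΓΓ).PosDef)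
    (BII : Matrix (Fin m) (Fin nI) ℝ) (hBII : BII.rank = m)
    (BIΓ : Matrix (Fin m) (Fin nΓ) ℝ) :
    (AΓΓ -
      Matrix.fromCols AΓI BIΓᵀ *
        (Matrix.fromBlocks AII BIIᵀ BII (0 : Matrix (Fin m) (Fin m) ℝ))⁻¹ *
        Matrix.fromRows AΓIᵀ BIΓ).PosDef := by
  have hAII : AII.PosDef := hA.submatrix Sum.inl_injective
  have hBIIinj : Function.Injective BIIᵀ.mulVec :=
    mulVec_transpose_injective_of_rank_eq_card (by rw [hBII, Fintype.card_fin])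
  have hK : IsUnit (fromBlocks AII BIIᵀ BII 0).det := by
    rw [← isUnit_iff_isUnit_det, ← mulVec_injective_iff_isUnit]
    exact hAII.fromBlocks_zero₂₂_mulVec_injective hBIIinj
  exact hA.sub_fromCols_mul_inv_mul_fromRows BIΓ hK

/-- Lemma 1: the subdomain Stokes Schur complement is symmetric positive definite.
Here `A = [[A_II, A_ΓIᵀ], [A_ΓI, A_ΓΓ]]` is the (symmetric positive definite) subdomain
velocity matrix, `B_II` (full row rank) and `B_IΓ` are the divergence blocks, and
`K = [[A_II, B_IIᵀ], [B_II, 0]]` is the (invertible) interior saddle-point matrix.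
The Schur complement obtained by eliminating the interior velocity and pressure unknowns,
`S_Γ = A_ΓΓ − [A_ΓI, B_IΓᵀ] K⁻¹ [A_ΓIᵀ; B_IΓ]`, is symmetric positive definite. -/
theorem stokes_schur_complement_posDef
    (nI nΓ m : ℕ) (hnI : 0 < nI) (hnΓ : 0 < nΓ) (hm : 0 < m)
    (AII : Matrix (Fin nI) (Fin nI) ℝ)
    (AΓI : Matrix (Fin nΓ) (Fin nI) ℝ)
    (AΓΓ : Matrix (Fin nΓ) (Fin nΓ) ℝ)
    (hA : (Matrix.fromBlocks AII AΓIᵀ AΓI AΓΓ).PosDef)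
    (BII : Matrix (Fin m) (Fin nI) ℝ) (hBII : BII.rank = m)
    (BIΓ : Matrix (Fin m) (Fin nΓ) ℝ) :
    (AΓΓ -
      Matrix.fromCols AΓI BIΓᵀ *
        (Matrix.fromBlocks AII BIIᵀ BII (0 : Matrix (Fin m) (Fin m) ℝ))⁻¹ *
        Matrix.fromRows AΓIᵀ BIΓ).PosDef :=
  stokes_schur_complement_posDef_general nI nΓ m AII AΓI AΓΓ hA BII hBII BIΓ
end

section
/- Let S̃ be an m×m real symmetric positive definite matrix, and let R̃ and R̃_D be m×n real matrices satisfying R̃_Dᵀ R̃ = Iₙ. Define Ŝ = R̃ᵀ S̃ R̃ and M⁻¹ = R̃_Dᵀ S̃⁻¹ R̃_D. Then for every u ∈ ℝⁿ, uᵀ Ŝ u ≤ uᵀ Ŝ M⁻¹ Ŝ u; i.e., the Ŝ-inner product satisfies ⟨u, u⟩_Ŝ ≤ ⟨u, M⁻¹ Ŝ u⟩_Ŝ, so every eigenvalue of the BDDC preconditioned operator M⁻¹ Ŝ is bounded below by 1. -/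
/-!
Put `x = S̃⁻¹ R̃_D Ŝ u` and `y = R̃ u`. Since `R̃_Dᵀ R̃ = I`, both `xᵀ S̃ y` and `yᵀ S̃ y` equal
`uᵀ Ŝ u`, while `xᵀ S̃ x = uᵀ Ŝ M⁻¹ Ŝ u`. Hence the gap between the two sides of the inequality
is the energy `(x - y)ᵀ S̃ (x - y)`, which is nonnegative.
-/

open Matrix

namespace Matrix

variable {ι κ ν R : Type*} [Fintype ι]

theorem mulVec_dotProduct_mulVec [Fintype κ] [Fintype ν] [CommSemiring R]
    (A : Matrix ι κ R) (B : Matrix ι ν R) (a : κ → R) (b : ν → R) :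
    A *ᵥ a ⬝ᵥ B *ᵥ b = a ⬝ᵥ (Aᵀ * B) *ᵥ b := by
  rw [← vecMul_transpose, dotProduct_mulVec, vecMul_vecMul, ← dotProduct_mulVec]

theorem sub_dotProduct_mulVec_sub [CommRing R] (S : Matrix ι ι R) (x y : ι → R) :
    (x - y) ⬝ᵥ S *ᵥ (x - y) = x ⬝ᵥ S *ᵥ x - x ⬝ᵥ S *ᵥ y - y ⬝ᵥ S *ᵥ x + y ⬝ᵥ S *ᵥ y := by
  simp only [mulVec_sub, sub_dotProduct, dotProduct_sub]
  ring

theorem IsSymm.dotProduct_mulVec_comm [CommSemiring R] {S : Matrix ι ι R} (hS : S.IsSymm)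
    (x y : ι → R) : x ⬝ᵥ S *ᵥ y = y ⬝ᵥ S *ᵥ x := by
  rw [dotProduct_mulVec, ← mulVec_transpose, hS.eq, dotProduct_comm]

end Matrix

theorem bddc_energy_gap {ι κ R : Type*} [Fintype ι] [Fintype κ] [DecidableEq ι]
    [DecidableEq κ] [CommRing R]
    {S : Matrix ι ι R} (hS : S.IsSymm) (hS_det : IsUnit S.det)
    {Rt RtD : Matrix ι κ R} (hR : RtDᵀ * Rt = 1) (u : κ → R) :
    let Sh := Rtᵀ * S * Rt
    let x := (S⁻¹ * RtD * Sh) *ᵥ u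
    let y := Rt *ᵥ u
    (x - y) ⬝ᵥ S *ᵥ (x - y) = u ⬝ᵥ (Sh * (RtDᵀ * S⁻¹ * RtD) * Sh) *ᵥ u - u ⬝ᵥ Sh *ᵥ u := by
  intro Sh x y
  have hSh : Shᵀ = Sh := by
    simp only [Sh, transpose_mul, transpose_transpose, hS.eq, Matrix.mul_assoc]
  have hR' : Rtᵀ * RtD = 1 := by simpa using congrArg transpose hR
  have hSx : S *ᵥ x = (RtD * Sh) *ᵥ u := by
    rw [mulVec_mulVec, Matrix.mul_assoc, mul_nonsing_inv_cancel_left S _ hS_det]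
  have hxx : x ⬝ᵥ S *ᵥ x = u ⬝ᵥ (Sh * (RtDᵀ * S⁻¹ * RtD) * Sh) *ᵥ u := by
    rw [hSx, dotProduct_comm, mulVec_dotProduct_mulVec, transpose_mul, hSh]
    simp only [Matrix.mul_assoc]
  have hyx : y ⬝ᵥ S *ᵥ x = u ⬝ᵥ Sh *ᵥ u := by
    rw [hSx, mulVec_dotProduct_mulVec, ← Matrix.mul_assoc, hR', Matrix.one_mul]
  have hyy : y ⬝ᵥ S *ᵥ y = u ⬝ᵥ Sh *ᵥ u := by
    rw [mulVec_mulVec, mulVec_dotProduct_mulVec, ← Matrix.mul_assoc]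
  rw [sub_dotProduct_mulVec_sub, hS.dotProduct_mulVec_comm x y, hxx, hyx, hyy]
  ring

/-- Lower bound for the BDDC preconditioned operator: with `S̃` symmetric positive definite,
`R̃_Dᵀ R̃ = I`, `Ŝ = R̃ᵀ S̃ R̃` and `M⁻¹ = R̃_Dᵀ S̃⁻¹ R̃_D`, one has
`⟨u, u⟩_Ŝ ≤ ⟨u, M⁻¹ Ŝ u⟩_Ŝ` for all `u`, i.e. every eigenvalue of `M⁻¹ Ŝ` is at least 1. -/
theorem bddc_eigenvalue_lower_bound
    (n m : ℕ)
    (St : Matrix (Fin m) (Fin m) ℝ) (hSt : St.PosDef)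
    (Rt RtD : Matrix (Fin m) (Fin n) ℝ)
    (hR : RtDᵀ * Rt = (1 : Matrix (Fin n) (Fin n) ℝ))
    (u : Fin n → ℝ) :
    u ⬝ᵥ (Rtᵀ * St * Rt).mulVec u ≤
      u ⬝ᵥ ((Rtᵀ * St * Rt) * (RtDᵀ * St⁻¹ * RtD) * (Rtᵀ * St * Rt)).mulVec u := by
  have hgap := bddc_energy_gap (isHermitian_iff_isSymm.mp hSt.isHermitian)
    ((isUnit_iff_isUnit_det St).mp hSt.isUnit) hR u
  have henergy := hSt.posSemidef.dotProduct_mulVec_nonneg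
    ((St⁻¹ * RtD * (Rtᵀ * St * Rt)) *ᵥ u - Rt *ᵥ u)
  rwa [star_trivial, hgap, sub_nonneg] at henergy
end

section
/- Let S̃ be an m×m real symmetric positive definite matrix, let R̃ and R̃_D be m×n real matrices satisfying R̃_Dᵀ R̃ = Iₙ, and define Ŝ = R̃ᵀ S̃ R̃, M⁻¹ = R̃_Dᵀ S̃⁻¹ R̃_D, and the averaging operator E_D = R̃ R̃_Dᵀ. Assume there is a constant C > 0 such that (E_D v)ᵀ S̃ (E_D v) ≤ C² · vᵀ S̃ v for all v ∈ ℝᵐ. Then for every u ∈ ℝⁿ, uᵀ Ŝ M⁻¹ Ŝ u ≤ C² · uᵀ Ŝ u; i.e., ⟨u, M⁻¹ Ŝ u⟩_Ŝ ≤ C² ⟨u, u⟩_Ŝ, so every eigenvalue of the preconditioned operator M⁻¹ Ŝ is bounded above by C². -/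
open Matrix

/-! Put `y = R̃_D Ŝ u`, `z = S̃⁻¹ y` and `w = R̃_Dᵀ z`. Then
`⟨u, M⁻¹ Ŝ u⟩_Ŝ = yᵀ S̃⁻¹ y = ⟨w, u⟩_Ŝ` and `R̃ w = E_D z`, so the stability bound reads
`|w|_Ŝ² ≤ C² |z|_S̃² = C² ⟨w, u⟩_Ŝ`. Cauchy–Schwarz in the `Ŝ`-seminorm gives
`⟨w, u⟩_Ŝ² ≤ |w|_Ŝ² |u|_Ŝ² ≤ C² ⟨w, u⟩_Ŝ |u|_Ŝ²`, and dividing by `⟨w, u⟩_Ŝ ≥ 0` proves the bound. -/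

variable {ι κ R : Type*} [Fintype ι] [Fintype κ] [CommRing R]

theorem Matrix.dotProduct_transpose_mul_mul_mulVec (A : Matrix ι κ R) (B : Matrix ι ι R)
    (x y : κ → R) : x ⬝ᵥ (Aᵀ * B * A) *ᵥ y = (A *ᵥ x) ⬝ᵥ B *ᵥ (A *ᵥ y) := by
  rw [Matrix.mul_assoc, ← mulVec_mulVec, dotProduct_mulVec, vecMul_transpose, ← mulVec_mulVec]

theorem Matrix.dotProduct_inv_mulVec [DecidableEq ι] {S : Matrix ι ι R} (hS : IsUnit S.det)
    (x : ι → R) : x ⬝ᵥ S⁻¹ *ᵥ x = (S⁻¹ *ᵥ x) ⬝ᵥ S *ᵥ (S⁻¹ *ᵥ x) := by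
  rw [mulVec_mulVec, mul_nonsing_inv S hS, one_mulVec, dotProduct_comm]

theorem Matrix.PosSemidef.dotProduct_mulVec_sq_le [DecidableEq ι] {A : Matrix ι ι ℝ}
    (hA : A.PosSemidef) (x y : ι → ℝ) : (x ⬝ᵥ A *ᵥ y) ^ 2 ≤ (x ⬝ᵥ A *ᵥ x) * (y ⬝ᵥ A *ᵥ y) := by
  have hsymm : LinearMap.IsSymm (toBilin' A) :=
    LinearMap.BilinForm.isSymm_iff.mp (isSymm_toBilin'_iff_isSymm.mpr hA.isHermitian)
  have hnonneg (v : ι → ℝ) : 0 ≤ toBilin' A v v := by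
    simpa [toBilin'_apply'] using hA.dotProduct_mulVec_nonneg v
  simpa only [toBilin'_apply'] using (toBilin' A).apply_sq_le_of_symm hnonneg hsymm x y

theorem le_mul_of_sq_le_mul_mul {α : Type*} [Field α] [LinearOrder α] [IsStrictOrderedRing α]
    {a b c : α} (ha : 0 ≤ a) (hbc : 0 ≤ c * b) (h : a ^ 2 ≤ c * a * b) : a ≤ c * b := by
  rcases ha.eq_or_lt with rfl | ha
  · exact hbc
  · exact le_of_mul_le_mul_right (by nlinarith) ha

theorem bddc_eigenvalue_upper_bound_general
    (n m : ℕ)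
    (St : Matrix (Fin m) (Fin m) ℝ) (hSt : St.PosDef)
    (Rt RtD : Matrix (Fin m) (Fin n) ℝ)
    (C : ℝ)
    (hED : ∀ v : Fin m → ℝ,
      (Rt * RtDᵀ).mulVec v ⬝ᵥ St.mulVec ((Rt * RtDᵀ).mulVec v) ≤
        C ^ 2 * (v ⬝ᵥ St.mulVec v))
    (u : Fin n → ℝ) :
    u ⬝ᵥ ((Rtᵀ * St * Rt) * (RtDᵀ * St⁻¹ * RtD) * (Rtᵀ * St * Rt)).mulVec u ≤
      C ^ 2 * (u ⬝ᵥ (Rtᵀ * St * Rt).mulVec u) := by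
  set Sh := Rtᵀ * St * Rt
  have hSh : Sh.PosSemidef := by
    simpa [conjTranspose_eq_transpose_of_trivial] using
      hSt.posSemidef.conjTranspose_mul_mul_same Rt
  set y := RtD *ᵥ Sh *ᵥ u
  set z := St⁻¹ *ᵥ y
  set w := RtDᵀ *ᵥ z
  have hlhs : u ⬝ᵥ (Sh * (RtDᵀ * St⁻¹ * RtD) * Sh) *ᵥ u = y ⬝ᵥ St⁻¹ *ᵥ y := by
    have hconj : Sh * (RtDᵀ * St⁻¹ * RtD) * Sh = (RtD * Sh)ᵀ * St⁻¹ * (RtD * Sh) := by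
      have hShT : Shᵀ = Sh := hSh.isHermitian
      simp only [transpose_mul, hShT, Matrix.mul_assoc]
    rw [hconj, dotProduct_transpose_mul_mul_mulVec, ← mulVec_mulVec]
  have hyw : y ⬝ᵥ St⁻¹ *ᵥ y = w ⬝ᵥ Sh *ᵥ u := by
    rw [dotProduct_comm, dotProduct_mulVec, ← mulVec_transpose, dotProduct_comm]
  have hw : w ⬝ᵥ Sh *ᵥ w ≤ C ^ 2 * (y ⬝ᵥ St⁻¹ *ᵥ y) := by
    rw [dotProduct_transpose_mul_mul_mulVec, dotProduct_inv_mulVec hSt.det_pos.ne'.isUnit]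
    simpa only [← mulVec_mulVec] using hED z
  have hy : 0 ≤ y ⬝ᵥ St⁻¹ *ᵥ y := by simpa using hSt.inv.posSemidef.dotProduct_mulVec_nonneg y
  have hu : 0 ≤ u ⬝ᵥ Sh *ᵥ u := by simpa using hSh.dotProduct_mulVec_nonneg u
  rw [hlhs]
  refine le_mul_of_sq_le_mul_mul hy (by positivity) ?_
  calc (y ⬝ᵥ St⁻¹ *ᵥ y) ^ 2 = (w ⬝ᵥ Sh *ᵥ u) ^ 2 := by rw [hyw]
    _ ≤ (w ⬝ᵥ Sh *ᵥ w) * (u ⬝ᵥ Sh *ᵥ u) := hSh.dotProduct_mulVec_sq_le w u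
    _ ≤ C ^ 2 * (y ⬝ᵥ St⁻¹ *ᵥ y) * (u ⬝ᵥ Sh *ᵥ u) := mul_le_mul_of_nonneg_right hw hu

/-- Upper bound for the BDDC preconditioned operator: with `S̃` symmetric positive definite,
`R̃_Dᵀ R̃ = I`, `Ŝ = R̃ᵀ S̃ R̃`, `M⁻¹ = R̃_Dᵀ S̃⁻¹ R̃_D` and `E_D = R̃ R̃_Dᵀ`, if the averaging
operator satisfies the stability bound `|E_D v|_S̃² ≤ C² |v|_S̃²` for all `v`, then
`⟨u, M⁻¹ Ŝ u⟩_Ŝ ≤ C² ⟨u, u⟩_Ŝ` for all `u`, i.e. every eigenvalue of `M⁻¹ Ŝ` is at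
most `C²`. -/
theorem bddc_eigenvalue_upper_bound
    (n m : ℕ)
    (St : Matrix (Fin m) (Fin m) ℝ) (hSt : St.PosDef)
    (Rt RtD : Matrix (Fin m) (Fin n) ℝ)
    (hR : RtDᵀ * Rt = (1 : Matrix (Fin n) (Fin n) ℝ))
    (C : ℝ) (hC : 0 < C)
    (hED : ∀ v : Fin m → ℝ,
      (Rt * RtDᵀ).mulVec v ⬝ᵥ St.mulVec ((Rt * RtDᵀ).mulVec v) ≤
        C ^ 2 * (v ⬝ᵥ St.mulVec v))
    (u : Fin n → ℝ) :
    u ⬝ᵥ ((Rtᵀ * St * Rt) * (RtDᵀ * St⁻¹ * RtD) * (Rtᵀ * St * Rt)).mulVec u ≤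
      C ^ 2 * (u ⬝ᵥ (Rtᵀ * St * Rt).mulVec u) :=
  bddc_eigenvalue_upper_bound_general n m St hSt Rt RtD C hED u
end

section
/- Let S̃ be an m×m real symmetric positive definite matrix, let R̃ and R̃_D be m×n real matrices with R̃_Dᵀ R̃ = Iₙ, define Ŝ = R̃ᵀ S̃ R̃, M⁻¹ = R̃_Dᵀ S̃⁻¹ R̃_D, and E_D = R̃ R̃_Dᵀ, and assume there is a constant C ≥ 1 such that (E_D v)ᵀ S̃ (E_D v) ≤ C² · vᵀ S̃ v for all v ∈ ℝᵐ. Then Ŝ is symmetric positive definite (R̃ being injective since R̃_Dᵀ R̃ = I), and for every u ∈ ℝⁿ with u ≠ 0, the generalized Rayleigh quotient satisfies 1 ≤ (uᵀ Ŝ M⁻¹ Ŝ u) / (uᵀ Ŝ u) ≤ C². In particular, every eigenvalue λ of the preconditioned BDDC operator M⁻¹ Ŝ (i.e., every λ ∈ ℝ for which there is w ≠ 0 with M⁻¹ Ŝ w = λ w) satisfies 1 ≤ λ ≤ C². -/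
/-!
Write `Ŝ = R̃ᵀ S̃ R̃`, `x = R̃ u`, `α = uᵀ Ŝ u = xᵀ S̃ x` and `p = R̃_D Ŝ u`, so that the numerator of
the Rayleigh quotient is `β = pᵀ S̃⁻¹ p`. Since `R̃_Dᵀ R̃ = I` we have `p ⬝ x = α`, and the
Cauchy–Schwarz inequality for the dual pairing gives `α² ≤ β α`, i.e. `α ≤ β`. For the upper bound
put `w = S̃⁻¹ p`; then `β = wᵀ S̃ w = xᵀ S̃ (E_D w)`, so Cauchy–Schwarz in the `S̃`-inner product and
the stability of `E_D` give `β² ≤ α · C² β`, i.e. `β ≤ C² α`. An eigenvector of `M⁻¹ Ŝ` has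
Rayleigh quotient equal to its eigenvalue.
-/

open Matrix

lemma le_of_sq_le_mul_of_nonneg {α : Type*} [CommRing α] [LinearOrder α] [IsStrictOrderedRing α]
    {x y : α} (hy : 0 ≤ y) (h : x ^ 2 ≤ x * y) : x ≤ y := by
  nlinarith

namespace Matrix

variable {ι κ : Type*} [Fintype ι]

lemma dotProduct_transpose_mul_mul_mulVec_s8 [Fintype κ] {R : Type*} [CommSemiring R]
    (A : Matrix ι ι R) (B : Matrix ι κ R) (u v : κ → R) :
    u ⬝ᵥ (Bᵀ * A * B) *ᵥ v = (B *ᵥ u) ⬝ᵥ A *ᵥ (B *ᵥ v) := by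
  rw [← mulVec_mulVec, ← mulVec_mulVec, dotProduct_transpose_mulVec, dotProduct_comm]

lemma IsSymm.transpose_mul_mul {R : Type*} [CommSemiring R] {A : Matrix ι ι R} (hA : A.IsSymm)
    (B : Matrix ι κ R) : (Bᵀ * A * B).IsSymm := by
  simp only [IsSymm, transpose_mul, transpose_transpose, hA.eq, Matrix.mul_assoc]

lemma IsSymm.dotProduct_mul_mul_mulVec {R : Type*} [CommSemiring R] {A : Matrix ι ι R}
    (hA : A.IsSymm) (B : Matrix ι ι R) (u : ι → R) :
    u ⬝ᵥ (A * B * A) *ᵥ u = (A *ᵥ u) ⬝ᵥ B *ᵥ (A *ᵥ u) := by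
  simpa only [hA.eq] using dotProduct_transpose_mul_mul_mulVec_s8 B A u u

variable [DecidableEq ι]

lemma PosSemidef.dotProduct_mulVec_sq_le_s8 {S : Matrix ι ι ℝ} (hS : S.PosSemidef) (a b : ι → ℝ) :
    (a ⬝ᵥ S *ᵥ b) ^ 2 ≤ (a ⬝ᵥ S *ᵥ a) * (b ⬝ᵥ S *ᵥ b) := by
  simpa only [toBilin'_apply'] using S.toBilin'.apply_sq_le_of_symm
    (fun x => by simpa [toBilin'_apply'] using hS.dotProduct_mulVec_nonneg x)
    (LinearMap.BilinForm.isSymm_iff.1 <| isSymm_toBilin'_iff_isSymm.2 <|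
      isHermitian_iff_isSymm.1 hS.1) a b

lemma PosDef.dotProduct_sq_le {S : Matrix ι ι ℝ} (hS : S.PosDef) (a b : ι → ℝ) :
    (a ⬝ᵥ b) ^ 2 ≤ (a ⬝ᵥ S⁻¹ *ᵥ a) * (b ⬝ᵥ S *ᵥ b) := by
  have hdet : IsUnit S.det := isUnit_iff_ne_zero.2 hS.det_pos.ne'
  have h := hS.inv.posSemidef.dotProduct_mulVec_sq_le_s8 a (S *ᵥ b)
  rwa [mulVec_mulVec, nonsing_inv_mul S hdet, one_mulVec, dotProduct_comm (S *ᵥ b)] at h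

end Matrix

section BDDC

variable {ι κ : Type*} [Fintype ι] [Fintype κ] {S : Matrix ι ι ℝ} {R RD : Matrix ι κ ℝ}

lemma posDef_transpose_mul_mul_of_mul_eq_one [DecidableEq κ] (hS : S.PosDef)
    (hR : RDᵀ * R = 1) : (Rᵀ * S * R).PosDef := by
  have hinj : Function.Injective R.mulVec :=
    Function.LeftInverse.injective (g := RDᵀ.mulVec) fun u => by
      rw [mulVec_mulVec, hR, one_mulVec]
  simpa only [conjTranspose_eq_transpose_of_trivial] using hS.conjTranspose_mul_mul_same hinj

variable [DecidableEq ι]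

lemma bddc_dotProduct_mulVec_eq (hS : S.IsSymm) (u : κ → ℝ) :
    u ⬝ᵥ ((Rᵀ * S * R) * (RDᵀ * S⁻¹ * RD) * (Rᵀ * S * R)) *ᵥ u =
      (RD *ᵥ (Rᵀ * S * R) *ᵥ u) ⬝ᵥ S⁻¹ *ᵥ (RD *ᵥ (Rᵀ * S * R) *ᵥ u) := by
  rw [(hS.transpose_mul_mul R).dotProduct_mul_mul_mulVec, dotProduct_transpose_mul_mul_mulVec_s8]

lemma bddc_lower_bound [DecidableEq κ] (hS : S.PosDef) (hR : RDᵀ * R = 1) (u : κ → ℝ) :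
    u ⬝ᵥ (Rᵀ * S * R) *ᵥ u ≤
      u ⬝ᵥ ((Rᵀ * S * R) * (RDᵀ * S⁻¹ * RD) * (Rᵀ * S * R)) *ᵥ u := by
  set q := (Rᵀ * S * R) *ᵥ u
  have hpair : (RD *ᵥ q) ⬝ᵥ (R *ᵥ u) = u ⬝ᵥ q := by
    rw [dotProduct_comm, ← dotProduct_transpose_mulVec, mulVec_mulVec, hR, one_mulVec,
      dotProduct_comm]
  have hcs := hS.dotProduct_sq_le (RD *ᵥ q) (R *ᵥ u)
  rw [hpair, ← dotProduct_transpose_mul_mul_mulVec_s8 S R u u] at hcs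
  rw [bddc_dotProduct_mulVec_eq (isHermitian_iff_isSymm.1 hS.1)]
  refine le_of_sq_le_mul_of_nonneg ?_ (by rwa [mul_comm] at hcs)
  simpa only [star_trivial] using hS.inv.posSemidef.dotProduct_mulVec_nonneg (RD *ᵥ q)

lemma bddc_upper_bound (hS : S.PosDef) {C : ℝ}
    (hE : ∀ v, (R * RDᵀ) *ᵥ v ⬝ᵥ S *ᵥ ((R * RDᵀ) *ᵥ v) ≤ C ^ 2 * (v ⬝ᵥ S *ᵥ v)) (u : κ → ℝ) :
    u ⬝ᵥ ((Rᵀ * S * R) * (RDᵀ * S⁻¹ * RD) * (Rᵀ * S * R)) *ᵥ u ≤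
      C ^ 2 * (u ⬝ᵥ (Rᵀ * S * R) *ᵥ u) := by
  have hSymm := isHermitian_iff_isSymm.1 hS.1
  have hdet : IsUnit S.det := isUnit_iff_ne_zero.2 hS.det_pos.ne'
  rw [bddc_dotProduct_mulVec_eq hSymm, dotProduct_transpose_mul_mul_mulVec_s8 S R u u]
  set q := (Rᵀ * S * R) *ᵥ u
  set w := S⁻¹ *ᵥ (RD *ᵥ q)
  have hw : RD *ᵥ q ⬝ᵥ w = w ⬝ᵥ S *ᵥ w := by
    rw [show S *ᵥ w = RD *ᵥ q by rw [mulVec_mulVec, mul_nonsing_inv S hdet, one_mulVec],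
      dotProduct_comm]
  have hwE : RD *ᵥ q ⬝ᵥ w = (R *ᵥ u) ⬝ᵥ S *ᵥ ((R * RDᵀ) *ᵥ w) := by
    calc RD *ᵥ q ⬝ᵥ w = q ⬝ᵥ RDᵀ *ᵥ w := by
          rw [dotProduct_transpose_mulVec, dotProduct_comm]
      _ = u ⬝ᵥ (Rᵀ * S * R) *ᵥ (RDᵀ *ᵥ w) := by
          rw [← (hSymm.transpose_mul_mul R).eq, dotProduct_transpose_mulVec (Rᵀ * S * R),
            dotProduct_comm]
      _ = (R *ᵥ u) ⬝ᵥ S *ᵥ ((R * RDᵀ) *ᵥ w) := by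
          rw [dotProduct_transpose_mul_mul_mulVec_s8, mulVec_mulVec w R]
  have hα : 0 ≤ (R *ᵥ u) ⬝ᵥ S *ᵥ (R *ᵥ u) := by
    simpa only [star_trivial] using hS.posSemidef.dotProduct_mulVec_nonneg (R *ᵥ u)
  refine le_of_sq_le_mul_of_nonneg (by positivity) ?_
  calc (RD *ᵥ q ⬝ᵥ w) ^ 2 = ((R *ᵥ u) ⬝ᵥ S *ᵥ ((R * RDᵀ) *ᵥ w)) ^ 2 := by rw [hwE]
    _ ≤ ((R *ᵥ u) ⬝ᵥ S *ᵥ (R *ᵥ u)) * ((R * RDᵀ) *ᵥ w ⬝ᵥ S *ᵥ ((R * RDᵀ) *ᵥ w)) :=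
        hS.posSemidef.dotProduct_mulVec_sq_le_s8 (R *ᵥ u) ((R * RDᵀ) *ᵥ w)
    _ ≤ ((R *ᵥ u) ⬝ᵥ S *ᵥ (R *ᵥ u)) * (C ^ 2 * (w ⬝ᵥ S *ᵥ w)) :=
        mul_le_mul_of_nonneg_left (hE w) hα
    _ = (RD *ᵥ q ⬝ᵥ w) * (C ^ 2 * ((R *ᵥ u) ⬝ᵥ S *ᵥ (R *ᵥ u))) := by rw [hw]; ring

end BDDC

theorem bddc_condition_number_general
    (n m : ℕ)
    (St : Matrix (Fin m) (Fin m) ℝ) (hSt : St.PosDef)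
    (Rt RtD : Matrix (Fin m) (Fin n) ℝ)
    (hR : RtDᵀ * Rt = (1 : Matrix (Fin n) (Fin n) ℝ))
    (C : ℝ)
    (hED : ∀ v : Fin m → ℝ,
      (Rt * RtDᵀ).mulVec v ⬝ᵥ St.mulVec ((Rt * RtDᵀ).mulVec v) ≤
        C ^ 2 * (v ⬝ᵥ St.mulVec v)) :
    (Rtᵀ * St * Rt).PosDef ∧
    (∀ u : Fin n → ℝ, u ≠ 0 →
      1 ≤ (u ⬝ᵥ ((Rtᵀ * St * Rt) * (RtDᵀ * St⁻¹ * RtD) * (Rtᵀ * St * Rt)).mulVec u) /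
            (u ⬝ᵥ (Rtᵀ * St * Rt).mulVec u) ∧
      (u ⬝ᵥ ((Rtᵀ * St * Rt) * (RtDᵀ * St⁻¹ * RtD) * (Rtᵀ * St * Rt)).mulVec u) /
            (u ⬝ᵥ (Rtᵀ * St * Rt).mulVec u) ≤ C ^ 2) ∧
    (∀ (lam : ℝ) (w : Fin n → ℝ), w ≠ 0 →
      ((RtDᵀ * St⁻¹ * RtD) * (Rtᵀ * St * Rt)).mulVec w = lam • w →
      1 ≤ lam ∧ lam ≤ C ^ 2) := by
  have hSh : (Rtᵀ * St * Rt).PosDef := posDef_transpose_mul_mul_of_mul_eq_one hSt hR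
  have hpos : ∀ u : Fin n → ℝ, u ≠ 0 → 0 < u ⬝ᵥ (Rtᵀ * St * Rt) *ᵥ u := fun u hu => by
    simpa only [star_trivial] using hSh.dotProduct_mulVec_pos hu
  refine ⟨hSh, fun u hu => ?_, fun lam w hw hlam => ?_⟩
  · rw [le_div_iff₀ (hpos u hu), div_le_iff₀ (hpos u hu), one_mul]
    exact ⟨bddc_lower_bound hSt hR u, bddc_upper_bound hSt hED u⟩
  · have hnum : w ⬝ᵥ ((Rtᵀ * St * Rt) * (RtDᵀ * St⁻¹ * RtD) * (Rtᵀ * St * Rt)) *ᵥ w =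
        lam * (w ⬝ᵥ (Rtᵀ * St * Rt) *ᵥ w) := by
      rw [Matrix.mul_assoc, ← mulVec_mulVec, hlam, mulVec_smul, dotProduct_smul, smul_eq_mul]
    have hlower := bddc_lower_bound hSt hR w
    have hupper := bddc_upper_bound hSt hED w
    rw [hnum] at hlower hupper
    exact ⟨le_of_mul_le_mul_right (by linarith) (hpos w hw),
      le_of_mul_le_mul_right hupper (hpos w hw)⟩

/-- Main BDDC condition number theorem (finite-dimensional content): with `S̃` symmetric
positive definite, `R̃_Dᵀ R̃ = I`, `Ŝ = R̃ᵀ S̃ R̃`, `M⁻¹ = R̃_Dᵀ S̃⁻¹ R̃_D`, `E_D = R̃ R̃_Dᵀ`,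
and the averaging stability bound `|E_D v|_S̃² ≤ C² |v|_S̃²` with `C ≥ 1`, the assembled
operator `Ŝ` is symmetric positive definite, the generalized Rayleigh quotient
`(uᵀ Ŝ M⁻¹ Ŝ u)/(uᵀ Ŝ u)` lies in `[1, C²]` for every `u ≠ 0`, and every eigenvalue `λ`
of `M⁻¹ Ŝ` satisfies `1 ≤ λ ≤ C²`. -/
theorem bddc_condition_number
    (n m : ℕ)
    (St : Matrix (Fin m) (Fin m) ℝ) (hSt : St.PosDef)
    (Rt RtD : Matrix (Fin m) (Fin n) ℝ)
    (hR : RtDᵀ * Rt = (1 : Matrix (Fin n) (Fin n) ℝ))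
    (C : ℝ) (hC : 1 ≤ C)
    (hED : ∀ v : Fin m → ℝ,
      (Rt * RtDᵀ).mulVec v ⬝ᵥ St.mulVec ((Rt * RtDᵀ).mulVec v) ≤
        C ^ 2 * (v ⬝ᵥ St.mulVec v)) :
    (Rtᵀ * St * Rt).PosDef ∧
    (∀ u : Fin n → ℝ, u ≠ 0 →
      1 ≤ (u ⬝ᵥ ((Rtᵀ * St * Rt) * (RtDᵀ * St⁻¹ * RtD) * (Rtᵀ * St * Rt)).mulVec u) /
            (u ⬝ᵥ (Rtᵀ * St * Rt).mulVec u) ∧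
      (u ⬝ᵥ ((Rtᵀ * St * Rt) * (RtDᵀ * St⁻¹ * RtD) * (Rtᵀ * St * Rt)).mulVec u) /
            (u ⬝ᵥ (Rtᵀ * St * Rt).mulVec u) ≤ C ^ 2) ∧
    (∀ (lam : ℝ) (w : Fin n → ℝ), w ≠ 0 →
      ((RtDᵀ * St⁻¹ * RtD) * (Rtᵀ * St * Rt)).mulVec w = lam • w →
      1 ≤ lam ∧ lam ≤ C ^ 2) :=
  bddc_condition_number_general n m St hSt Rt RtD hR C hED
end
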